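/- Let C, D : ℝ → ℝ be differentiable functions with D'(0) = 0, define θ(x,y) = arcsin(tanh(C(x)+D(y))), and let w : ℝ² → ℝ be a differentiable function satisfying the Bäcklund equation ∂w/∂x − ∂θ/∂y = −2 sinh(w) sin(θ) on ℝ². Then for every x ∈ ℝ, tanh(w(x,0)/2) = tanh(w(0,0)/2) · exp(−2 ∫₀^x sin θ(t,0) dt). -/

import Mathlib

/-!
At `y = 0` the term `∂θ/∂y = (arcsin ∘ tanh)'(C x + D 0) · D'(0)` vanishes, so along the
`x`-axis the Bäcklund equation becomes the ODE `w' = -2 sin θ · sinh w`. Since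
`sinh w = 2 sinh (w/2) cosh (w/2)`, the function `tanh (w/2)` then satisfies the linear ODE
`g' = -2 sin θ · g`, whose solutions are `g(0) · exp (-2 ∫₀ˣ sin θ)`.
-/

open Real

/-- First partial derivative (in the x-direction) of a function on ℝ². -/
noncomputable def pdx (f : ℝ × ℝ → ℝ) (p : ℝ × ℝ) : ℝ := fderiv ℝ f p (1, 0)

/-- Second partial derivative (in the y-direction) of a function on ℝ². -/
noncomputable def pdy (f : ℝ × ℝ → ℝ) (p : ℝ × ℝ) : ℝ := fderiv ℝ f p (0, 1)

theorem hasDerivAt_pdx {f : ℝ × ℝ → ℝ} {p : ℝ × ℝ} (hf : DifferentiableAt ℝ f p) :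
    HasDerivAt (fun x => f (x, p.2)) (pdx f p) p.1 :=
  hf.hasFDerivAt.comp_hasDerivAt p.1 ((hasDerivAt_id p.1).prodMk (hasDerivAt_const p.1 p.2))

theorem hasDerivAt_pdy {f : ℝ × ℝ → ℝ} {p : ℝ × ℝ} (hf : DifferentiableAt ℝ f p) :
    HasDerivAt (fun y => f (p.1, y)) (pdy f p) p.2 :=
  hf.hasFDerivAt.comp_hasDerivAt p.2 ((hasDerivAt_const p.2 p.1).prodMk (hasDerivAt_id p.2))

theorem pdy_comp_add {F C D : ℝ → ℝ} {x y : ℝ} (hF : DifferentiableAt ℝ F (C x + D y))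
    (hC : DifferentiableAt ℝ C x) (hD : DifferentiableAt ℝ D y) :
    pdy (fun p => F (C p.1 + D p.2)) (x, y) = deriv F (C x + D y) * deriv D y := by
  have hdiff : DifferentiableAt ℝ (fun p : ℝ × ℝ => F (C p.1 + D p.2)) (x, y) :=
    hF.comp (x, y) ((hC.comp (x, y) differentiableAt_fst).add (hD.comp (x, y) differentiableAt_snd))
  exact (hasDerivAt_pdy hdiff).unique (hF.hasDerivAt.comp y (hD.hasDerivAt.const_add (C x)))

theorem Real.hasDerivAt_tanh (x : ℝ) : HasDerivAt tanh (cosh x ^ 2)⁻¹ x := by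
  have h := (hasDerivAt_sinh x).div (hasDerivAt_cosh x) (cosh_pos x).ne'
  rw [show cosh x * cosh x - sinh x * sinh x = 1 by nlinarith [cosh_sq_sub_sinh_sq x]] at h
  rw [funext tanh_eq_sinh_div_cosh, ← one_div]
  exact h

theorem Real.differentiable_arcsin_tanh : Differentiable ℝ fun s => arcsin (tanh s) := fun s =>
  (differentiableAt_arcsin.2 ⟨(neg_one_lt_tanh s).ne', (tanh_lt_one s).ne⟩).comp s
    (hasDerivAt_tanh s).differentiableAt

theorem HasDerivAt.tanh_half_of_sinh {u : ℝ → ℝ} {a x : ℝ}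
    (hu : HasDerivAt u (a * Real.sinh (u x)) x) :
    HasDerivAt (fun t => tanh (u t / 2)) (a * tanh (u x / 2)) x := by
  refine ((hasDerivAt_tanh _).comp x (hu.div_const 2)).congr_deriv ?_
  have hc := (cosh_pos (u x / 2)).ne'
  rw [show u x = 2 * (u x / 2) by ring, sinh_two_mul, tanh_eq_sinh_div_cosh]
  field_simp

theorem eq_mul_exp_integral_of_hasDerivAt {g a : ℝ → ℝ} (ha : Continuous a)
    (hg : ∀ x, HasDerivAt g (a x * g x) x) (x₀ x : ℝ) :
    g x = g x₀ * exp (∫ t in x₀..x, a t) := by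
  set I : ℝ → ℝ := fun x => ∫ t in x₀..x, a t
  have hI : ∀ x, HasDerivAt I (a x) x := fun x => (ha.integral_hasStrictDerivAt x₀ x).hasDerivAt
  have hconst : ∀ x, HasDerivAt (fun x => g x * exp (-I x)) 0 x := fun x =>
    ((hg x).mul (hI x).neg.exp).congr_deriv (by ring)
  have h := is_const_of_deriv_eq_zero (fun y => (hconst y).differentiableAt)
    (fun y => (hconst y).deriv) x x₀
  simp only [I, intervalIntegral.integral_same, neg_zero, exp_zero, mul_one] at h
  rw [← h, mul_assoc, ← exp_add, neg_add_cancel, exp_zero, mul_one]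

theorem stmt_11 (C D : ℝ → ℝ) (hC : Differentiable ℝ C) (hD : Differentiable ℝ D)
    (hD'0 : deriv D 0 = 0)
    (θ : ℝ × ℝ → ℝ)
    (hθ : ∀ p : ℝ × ℝ, θ p = Real.arcsin (Real.tanh (C p.1 + D p.2)))
    (w : ℝ × ℝ → ℝ) (hw : Differentiable ℝ w)
    (hB1 : ∀ p : ℝ × ℝ, pdx w p - pdy θ p = -2 * Real.sinh (w p) * Real.sin (θ p)) :
    ∀ x : ℝ, Real.tanh (w (x, 0) / 2) =
      Real.tanh (w (0, 0) / 2) * Real.exp (-2 * ∫ t in (0 : ℝ)..x, Real.sin (θ (t, 0))) := by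
  have hθ_y (x : ℝ) : pdy θ (x, 0) = 0 := by
    rw [funext hθ, pdy_comp_add (differentiable_arcsin_tanh _) (hC x) (hD 0), hD'0, mul_zero]
  have hw_x (x : ℝ) : HasDerivAt (fun t => w (t, 0)) (-2 * sin (θ (x, 0)) * sinh (w (x, 0))) x :=
    (hasDerivAt_pdx (hw (x, 0))).congr_deriv (by linarith [hB1 (x, 0), hθ_y x])
  have ha : Continuous fun t => -2 * sin (θ (t, 0)) := by
    simp only [hθ]
    exact continuous_const.mul (continuous_sin.comp
      (differentiable_arcsin_tanh.continuous.comp (hC.continuous.add continuous_const)))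
  intro x
  rw [← intervalIntegral.integral_const_mul]
  exact eq_mul_exp_integral_of_hasDerivAt ha (fun t => (hw_x t).tanh_half_of_sinh) 0 x
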